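/- For n ≥ 1, the number of plane trees with n edges and k young leaves is C(n-1,k)·M_{n-k-1}, where M_m denotes the m-th Motzkin number. -/

import Mathlib

/-- A plane tree: a root together with an ordered (possibly empty) list of subtrees. -/
inductive PlaneTree where
  | node : List PlaneTree → PlaneTree

namespace PlaneTree

/-- The number of edges of a plane tree. -/
def edges : PlaneTree → ℕ
  | node ts => (ts.attach.map (fun t => edges t.1 + 1)).sum
decreasing_by have := List.sizeOf_lt_of_mem t.2; simp at *; omega

/-- Indicator that a tree is a single vertex (i.e. the corresponding child is a leaf). -/
def isLeafInd : PlaneTree → ℕ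
  | node [] => 1
  | node (_ :: _) => 0

/-- The number of old leaves: leaves that are the leftmost child of their parent. -/
def oldLeaves : PlaneTree → ℕ
  | node [] => 0
  | node (t :: ts) =>
      isLeafInd t + oldLeaves t + (ts.attach.map (fun s => oldLeaves s.1)).sum
decreasing_by
  · simp; omega
  · have := List.sizeOf_lt_of_mem s.2; simp at *; omega

/-- The number of young leaves: leaves that are not the leftmost child of their parent. -/
def youngLeaves : PlaneTree → ℕ
  | node [] => 0
  | node (t :: ts) =>
      youngLeaves t + (ts.attach.map (fun s => isLeafInd s.1 + youngLeaves s.1)).sum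
decreasing_by
  · simp; omega
  · have := List.sizeOf_lt_of_mem s.2; simp at *; omega

end PlaneTree

/-- The `m`-th Motzkin number, `M_m = Σ_k C(m,2k)·Catalan(k)`. -/
def motzkin (m : ℕ) : ℕ := ∑ k ∈ Finset.range (m + 1), m.choose (2 * k) * catalan k

/-!
Removing the last subtree of the root splits a tree with `n + 1` edges into two trees with `n`
edges in total. Young leaves add up, except that the removed subtree contributes one more when it
is a single vertex and what remains is not. So the young-leaf polynomials `P m` of the trees with
`m + 1` edges satisfy `P (m + 2) = (1 + y) P (m + 1) + ∑_{a + b = m} P a P b`: this is the Motzkin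
recurrence with level steps weighted `1 + y`. The weighted Motzkin numbers
`∑_j C(m, 2j) Cat_j c^(m - 2j)` obey it too (Pascal's rule, `∑_{a + b = m} C(a, p) C(b, q) =
C(m + 1, p + q + 1)` and Segner's recurrence for the Catalan numbers), and at `c = 1 + y` the
coefficient of `y^k` is `C(m, k) M_{m-k}`.
-/

open Finset Finset.Nat

theorem Nat.sum_antidiagonal_choose_mul_choose (m p q : ℕ) :
    ∑ ij ∈ antidiagonal m, ij.1.choose p * ij.2.choose q = (m + 1).choose (p + q + 1) := by
  induction m generalizing q with
  | zero => rcases p with _ | p <;> rcases q with _ | q <;> simp [Nat.choose_eq_zero_of_lt]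
  | succ m ih =>
    rw [sum_antidiagonal_succ']
    rcases q with _ | q
    · have h := ih 0
      simp only [Nat.choose_zero_right, mul_one, add_zero] at h ⊢
      rw [h, Nat.choose_succ_succ' (m + 1) p, add_comm]
    · rw [Nat.choose_zero_succ, mul_zero, zero_add]
      simp only [Nat.choose_succ_succ' _ q, mul_add, sum_add_distrib, ih]
      rw [Nat.choose_succ_succ' (m + 1) (p + (q + 1)), ← add_assoc]

theorem Finset.sum_range_sum_range_eq_sum_range_sum_antidiagonal {M : Type*} [AddCommMonoid M]
    {N : ℕ} {f : ℕ → ℕ → M} (hf : ∀ u v, N ≤ u + v → f u v = 0) :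
    ∑ u ∈ range N, ∑ v ∈ range N, f u v =
      ∑ w ∈ range N, ∑ ij ∈ antidiagonal w, f ij.1 ij.2 := by
  simp_rw [sum_antidiagonal_eq_sum_range_succ f]
  symm
  rw [sum_comm' (t' := range N) (s' := fun u => Ico u N)
    (by intro w u; simp only [mem_range, mem_Ico]; omega)]
  refine sum_congr rfl fun u hu => ?_
  rw [sum_Ico_eq_sum_range]
  simp only [add_tsub_cancel_left]
  exact sum_subset (range_subset_range.2 (Nat.sub_le N u))
    fun v _ hv => hf u v (by simp only [mem_range] at hu hv; omega)

section WeightedMotzkin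

variable {R : Type*} [CommSemiring R] (c : R)

/-- Motzkin paths of length `m` in which each level step weighs `c`: the `2 * j` up and down steps
form a Dyck path. -/
def weightedMotzkin (m : ℕ) : R :=
  ∑ j ∈ range (m + 1), (m.choose (2 * j) * catalan j : R) * c ^ (m - 2 * j)

theorem weightedMotzkin_zero : weightedMotzkin c 0 = 1 := by simp [weightedMotzkin]

theorem weightedMotzkin_one : weightedMotzkin c 1 = c := by simp [weightedMotzkin, sum_range_succ]

theorem weightedMotzkin_eq_sum_range {m N : ℕ} (h : m < N) :
    weightedMotzkin c m = ∑ j ∈ range N, (m.choose (2 * j) * catalan j : R) * c ^ (m - 2 * j) :=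
  sum_subset (range_subset_range.2 h) fun j _ hj => by
    rw [Nat.choose_eq_zero_of_lt (by simp at hj; omega)]; simp

theorem sum_antidiagonal_choose_mul_pow_mul_choose_mul_pow (m p q : ℕ) :
    ∑ ij ∈ antidiagonal m,
        (ij.1.choose p : R) * c ^ (ij.1 - p) * (ij.2.choose q * c ^ (ij.2 - q)) =
      (m + 1).choose (p + q + 1) * c ^ (m - (p + q)) := by
  have key : ∀ ij ∈ antidiagonal m,
      (ij.1.choose p : R) * c ^ (ij.1 - p) * (ij.2.choose q * c ^ (ij.2 - q)) =
        ((ij.1.choose p * ij.2.choose q : ℕ) : R) * c ^ (m - (p + q)) := by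
    rintro ⟨a, b⟩ hab
    rw [HasAntidiagonal.mem_antidiagonal] at hab
    dsimp only at hab ⊢
    rcases lt_or_ge a p with hp | hp
    · simp [Nat.choose_eq_zero_of_lt hp]
    rcases lt_or_ge b q with hq | hq
    · simp [Nat.choose_eq_zero_of_lt hq]
    rw [mul_mul_mul_comm, ← pow_add, Nat.cast_mul, ← hab]
    congr 2
    omega
  rw [sum_congr rfl key, ← sum_mul, ← Nat.cast_sum, Nat.sum_antidiagonal_choose_mul_choose]

theorem sum_antidiagonal_weightedMotzkin_mul (m : ℕ) :
    ∑ ij ∈ antidiagonal m, weightedMotzkin c ij.1 * weightedMotzkin c ij.2 =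
      ∑ w ∈ range (m + 2),
        ((m + 1).choose (2 * w + 1) * catalan (w + 1) : R) * c ^ (m - 2 * w) := by
  set f : ℕ → ℕ → R := fun u v =>
    catalan u * catalan v * ((m + 1).choose (2 * u + 2 * v + 1) * c ^ (m - (2 * u + 2 * v)))
  have expand : ∀ ij ∈ antidiagonal m, weightedMotzkin c ij.1 * weightedMotzkin c ij.2 =
      ∑ u ∈ range (m + 2), ∑ v ∈ range (m + 2), catalan u * catalan v *
        ((ij.1.choose (2 * u) : R) * c ^ (ij.1 - 2 * u) *
          (ij.2.choose (2 * v) * c ^ (ij.2 - 2 * v))) := by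
    intro ij hij
    rw [HasAntidiagonal.mem_antidiagonal] at hij
    rw [weightedMotzkin_eq_sum_range c (N := m + 2) (by omega),
      weightedMotzkin_eq_sum_range c (N := m + 2) (by omega), sum_mul_sum]
    refine sum_congr rfl fun u _ => sum_congr rfl fun v _ => by ring
  have vanish : ∀ u v, m + 2 ≤ u + v → f u v = 0 := fun u v h => by
    simp [f, Nat.choose_eq_zero_of_lt (show m + 1 < 2 * u + 2 * v + 1 by omega)]
  calc ∑ ij ∈ antidiagonal m, weightedMotzkin c ij.1 * weightedMotzkin c ij.2
      = ∑ u ∈ range (m + 2), ∑ v ∈ range (m + 2), f u v := by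
        rw [sum_congr rfl expand, sum_comm]
        refine sum_congr rfl fun u _ => ?_
        rw [sum_comm]
        refine sum_congr rfl fun v _ => ?_
        rw [← mul_sum, sum_antidiagonal_choose_mul_pow_mul_choose_mul_pow]
    _ = ∑ w ∈ range (m + 2), ∑ ij ∈ antidiagonal w, f ij.1 ij.2 :=
        sum_range_sum_range_eq_sum_range_sum_antidiagonal vanish
    _ = _ := by
        refine sum_congr rfl fun w _ => ?_
        have hf : ∀ ij ∈ antidiagonal w, f ij.1 ij.2 = (catalan ij.1 * catalan ij.2 : R) *
            ((m + 1).choose (2 * w + 1) * c ^ (m - 2 * w)) := by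
          intro ij hij
          rw [HasAntidiagonal.mem_antidiagonal] at hij
          simp only [f, ← mul_add, hij]
        rw [sum_congr rfl hf, ← sum_mul, catalan_succ']
        push_cast
        ring

theorem weightedMotzkin_succ_succ (m : ℕ) :
    weightedMotzkin c (m + 2) = c * weightedMotzkin c (m + 1) +
      ∑ ij ∈ antidiagonal m, weightedMotzkin c ij.1 * weightedMotzkin c ij.2 := by
  have shift : c * weightedMotzkin c (m + 1) =
      ∑ j ∈ range (m + 2 + 1),
        ((m + 1).choose (2 * j) * catalan j : R) * c ^ (m + 2 - 2 * j) := by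
    rw [weightedMotzkin_eq_sum_range c (N := m + 2 + 1) (by omega), mul_sum]
    refine sum_congr rfl fun j _ => ?_
    rcases le_or_gt (2 * j) (m + 1) with h | h
    · rw [mul_left_comm, ← pow_succ', show m + 2 - 2 * j = m + 1 - 2 * j + 1 by omega]
    · simp [Nat.choose_eq_zero_of_lt h]
  have exponent : ∀ w, m + 2 - 2 * (w + 1) = m - 2 * w := fun w => by omega
  have pascal : ∀ w, (m + 2).choose (2 * (w + 1)) = (m + 1).choose (2 * w + 1) +
      (m + 1).choose (2 * (w + 1)) := fun w => Nat.choose_succ_succ' (m + 1) (2 * w + 1)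
  rw [sum_antidiagonal_weightedMotzkin_mul, shift, weightedMotzkin, sum_range_succ' _ (m + 2),
    sum_range_succ' _ (m + 2)]
  simp only [exponent, pascal, Nat.cast_add, add_mul, sum_add_distrib, mul_zero,
    Nat.choose_zero_right]
  ring

end WeightedMotzkin

theorem motzkin_eq_weightedMotzkin_one (m : ℕ) : motzkin m = weightedMotzkin (1 : ℕ) m := by
  simp [motzkin, weightedMotzkin]

theorem Nat.choose_mul_choose_sub_comm (m i k : ℕ) :
    m.choose i * (m - i).choose k = m.choose k * (m - k).choose i := by
  rcases le_or_gt (i + k) m with h | h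
  · have hi := Nat.choose_mul (n := m) (k := i + k) (s := i) (by omega)
    have hk := Nat.choose_mul (n := m) (k := i + k) (s := k) (by omega)
    rw [Nat.add_sub_cancel_left, Nat.choose_symm_add] at hi
    rw [Nat.add_sub_cancel] at hk
    rw [← hi, hk]
  rcases le_or_gt i m with hi | hi
  · rcases le_or_gt k m with hk | hk
    · simp [Nat.choose_eq_zero_of_lt (show m - i < k by omega),
        Nat.choose_eq_zero_of_lt (show m - k < i by omega)]
    · simp [Nat.choose_eq_zero_of_lt (show m - i < k by omega), Nat.choose_eq_zero_of_lt hk]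
  · simp [Nat.choose_eq_zero_of_lt hi, Nat.choose_eq_zero_of_lt (show m - k < i by omega)]

open Polynomial in
theorem coeff_weightedMotzkin_one_add_X (m k : ℕ) :
    (weightedMotzkin (1 + X : ℕ[X]) m).coeff k = m.choose k * motzkin (m - k) := by
  rw [motzkin_eq_weightedMotzkin_one,
    weightedMotzkin_eq_sum_range (1 : ℕ) (m := m - k) (N := m + 1) (by omega), weightedMotzkin,
    finsetSum_coeff, mul_sum]
  refine sum_congr rfl fun j _ => ?_
  rw [← Nat.cast_mul, coeff_natCast_mul, coeff_one_add_X_pow]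
  simp only [Nat.cast_id, one_pow, mul_one]
  rw [mul_right_comm, Nat.choose_mul_choose_sub_comm, mul_assoc]

namespace PlaneTree

theorem edges_node (ts : List PlaneTree) : (node ts).edges = (ts.map fun t => t.edges + 1).sum := by
  rw [edges]
  exact congrArg List.sum (List.attach_map_val (f := fun t : PlaneTree => t.edges + 1))

theorem youngLeaves_node_cons (t : PlaneTree) (ts : List PlaneTree) :
    (node (t :: ts)).youngLeaves =
      t.youngLeaves + (ts.map fun s => s.isLeafInd + s.youngLeaves).sum := by
  rw [youngLeaves]
  exact congrArg _ (congrArg List.sum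
    (List.attach_map_val (f := fun s : PlaneTree => s.isLeafInd + s.youngLeaves)))

theorem edges_eq_zero_iff {T : PlaneTree} : T.edges = 0 ↔ T = node [] := by
  obtain ⟨_ | ⟨t, ts⟩⟩ := T <;> simp [edges_node]

theorem isLeafInd_eq_zero {T : PlaneTree} (h : T ≠ node []) : T.isLeafInd = 0 := by
  obtain ⟨_ | ⟨t, ts⟩⟩ := T
  · exact absurd rfl h
  · rfl

def snoc : PlaneTree → PlaneTree → PlaneTree
  | node ts, t => node (ts ++ [t])

theorem snoc_injective : Function.Injective fun bt : PlaneTree × PlaneTree => snoc bt.1 bt.2 := by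
  rintro ⟨⟨ts⟩, t⟩ ⟨⟨ts'⟩, t'⟩ h
  obtain ⟨rfl, h⟩ := List.append_inj' (node.inj h) rfl
  simp_all

theorem edges_snoc (b t : PlaneTree) : (snoc b t).edges = b.edges + t.edges + 1 := by
  obtain ⟨ts⟩ := b
  simp only [snoc, edges_node, List.map_append, List.sum_append, List.map_cons, List.map_nil,
    List.sum_cons, List.sum_nil]
  ring

theorem exists_eq_snoc {T : PlaneTree} (h : T ≠ node []) : ∃ b t, T = snoc b t := by
  obtain ⟨ts⟩ := T
  obtain ⟨ts, t, rfl⟩ := List.eq_nil_or_concat' ts |>.resolve_left (by rintro rfl; exact h rfl)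
  exact ⟨node ts, t, rfl⟩

theorem youngLeaves_node_nil_snoc (t : PlaneTree) :
    (snoc (node []) t).youngLeaves = t.youngLeaves := by
  simp [snoc, youngLeaves_node_cons]

theorem youngLeaves_snoc {b : PlaneTree} (hb : b ≠ node []) (t : PlaneTree) :
    (snoc b t).youngLeaves = b.youngLeaves + t.youngLeaves + t.isLeafInd := by
  obtain ⟨_ | ⟨s, ss⟩⟩ := b
  · exact absurd rfl hb
  · simp only [snoc, List.cons_append, youngLeaves_node_cons, List.map_append, List.sum_append,
      List.map_cons, List.map_nil, List.sum_cons, List.sum_nil]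
    ring

noncomputable instance : DecidableEq PlaneTree := Classical.decEq _

def snocEmbedding : PlaneTree × PlaneTree ↪ PlaneTree :=
  ⟨fun bt => snoc bt.1 bt.2, snoc_injective⟩

noncomputable def treesOfNumEdgesEq : ℕ → Finset PlaneTree
  | 0 => {node []}
  | n + 1 =>
    (antidiagonal n).attach.biUnion fun ij =>
      (treesOfNumEdgesEq ij.1.1 ×ˢ treesOfNumEdgesEq ij.1.2).map snocEmbedding
  decreasing_by
    all_goals have hsum := HasAntidiagonal.mem_antidiagonal.1 ij.2; omega

theorem treesOfNumEdgesEq_zero : treesOfNumEdgesEq 0 = {node []} := by rw [treesOfNumEdgesEq]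

theorem treesOfNumEdgesEq_succ (n : ℕ) :
    treesOfNumEdgesEq (n + 1) = (antidiagonal n).biUnion fun ij =>
      (treesOfNumEdgesEq ij.1 ×ˢ treesOfNumEdgesEq ij.2).map snocEmbedding := by
  rw [treesOfNumEdgesEq]
  ext
  simp

theorem mem_treesOfNumEdgesEq {T : PlaneTree} {n : ℕ} :
    T ∈ treesOfNumEdgesEq n ↔ T.edges = n := by
  induction n using Nat.strong_induction_on generalizing T with
  | _ n ih =>
    rcases n with _ | n
    · simp [treesOfNumEdgesEq_zero, edges_eq_zero_iff]
    simp only [treesOfNumEdgesEq_succ, mem_biUnion, mem_map, mem_product, snocEmbedding,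
      Function.Embedding.coeFn_mk, Prod.exists, HasAntidiagonal.mem_antidiagonal]
    constructor
    · rintro ⟨i, j, hij, b, t, ⟨hb, ht⟩, rfl⟩
      rw [ih i (by omega)] at hb
      rw [ih j (by omega)] at ht
      rw [edges_snoc, hb, ht, hij]
    · intro hT
      obtain ⟨b, t, rfl⟩ := exists_eq_snoc (T := T) (by rintro rfl; simp [edges_node] at hT)
      rw [edges_snoc] at hT
      exact ⟨b.edges, t.edges, by omega, b, t,
        ⟨(ih _ (by omega)).2 rfl, (ih _ (by omega)).2 rfl⟩, rfl⟩

theorem sum_treesOfNumEdgesEq_succ {M : Type*} [AddCommMonoid M] (f : PlaneTree → M) (n : ℕ) :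
    ∑ T ∈ treesOfNumEdgesEq (n + 1), f T =
      ∑ ij ∈ antidiagonal n, ∑ b ∈ treesOfNumEdgesEq ij.1, ∑ t ∈ treesOfNumEdgesEq ij.2,
        f (snoc b t) := by
  rw [treesOfNumEdgesEq_succ, sum_biUnion]
  · simp only [sum_map, sum_product]
    rfl
  · intro ij _ ij' _ hne
    simp only [Function.onFun, disjoint_left, mem_map, mem_product, not_exists, not_and]
    rintro _ ⟨⟨b, t⟩, ⟨hb, ht⟩, rfl⟩ ⟨b', t'⟩ ⟨hb', ht'⟩ h
    obtain ⟨rfl, rfl⟩ := Prod.ext_iff.1 (snoc_injective h)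
    rw [mem_treesOfNumEdgesEq] at hb ht hb' ht'
    exact hne (Prod.ext (hb.symm.trans hb') (ht.symm.trans ht'))

theorem ne_node_nil_of_mem_treesOfNumEdgesEq_succ {T : PlaneTree} {n : ℕ}
    (h : T ∈ treesOfNumEdgesEq (n + 1)) : T ≠ node [] := by
  rw [mem_treesOfNumEdgesEq] at h
  rintro rfl
  simp [edges_node] at h

open Polynomial

noncomputable def youngLeavesPoly (n : ℕ) : ℕ[X] :=
  ∑ T ∈ treesOfNumEdgesEq n, X ^ T.youngLeaves

theorem coeff_youngLeavesPoly (n k : ℕ) :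
    (youngLeavesPoly n).coeff k =
      Nat.card {T : PlaneTree // T.edges = n ∧ T.youngLeaves = k} := by
  rw [youngLeavesPoly, finsetSum_coeff]
  simp only [coeff_X_pow]
  rw [sum_boole, Nat.cast_id, ← Nat.card_eq_finsetCard]
  exact Nat.card_congr (Equiv.subtypeEquivRight fun T => by
    rw [mem_filter, mem_treesOfNumEdgesEq, eq_comm (a := k)])

theorem sum_node_nil_snoc (n : ℕ) :
    ∑ b ∈ treesOfNumEdgesEq 0, ∑ t ∈ treesOfNumEdgesEq n,
      (X : ℕ[X]) ^ (snoc b t).youngLeaves = youngLeavesPoly n := by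
  simp [treesOfNumEdgesEq_zero, youngLeaves_node_nil_snoc, youngLeavesPoly]

theorem sum_snoc_node_nil (n : ℕ) :
    ∑ b ∈ treesOfNumEdgesEq (n + 1), ∑ t ∈ treesOfNumEdgesEq 0,
      (X : ℕ[X]) ^ (snoc b t).youngLeaves = X * youngLeavesPoly (n + 1) := by
  rw [youngLeavesPoly, mul_sum]
  refine sum_congr rfl fun b hb => ?_
  rw [treesOfNumEdgesEq_zero, sum_singleton,
    youngLeaves_snoc (ne_node_nil_of_mem_treesOfNumEdgesEq_succ hb)]
  simp [isLeafInd, youngLeaves, pow_succ']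

theorem sum_snoc_of_ne_node_nil (i j : ℕ) :
    ∑ b ∈ treesOfNumEdgesEq (i + 1), ∑ t ∈ treesOfNumEdgesEq (j + 1),
      (X : ℕ[X]) ^ (snoc b t).youngLeaves =
        youngLeavesPoly (i + 1) * youngLeavesPoly (j + 1) := by
  rw [youngLeavesPoly, youngLeavesPoly, sum_mul_sum]
  refine sum_congr rfl fun b hb => sum_congr rfl fun t ht => ?_
  rw [youngLeaves_snoc (ne_node_nil_of_mem_treesOfNumEdgesEq_succ hb),
    isLeafInd_eq_zero (ne_node_nil_of_mem_treesOfNumEdgesEq_succ ht), add_zero, pow_add]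

theorem youngLeavesPoly_one : youngLeavesPoly 1 = 1 := by
  rw [youngLeavesPoly, sum_treesOfNumEdgesEq_succ, antidiagonal_zero, sum_singleton,
    sum_node_nil_snoc, youngLeavesPoly, treesOfNumEdgesEq_zero, sum_singleton]
  simp [youngLeaves]

theorem youngLeavesPoly_two : youngLeavesPoly 2 = 1 + X := by
  rw [youngLeavesPoly, sum_treesOfNumEdgesEq_succ, sum_antidiagonal_succ, antidiagonal_zero,
    sum_singleton, sum_node_nil_snoc, sum_snoc_node_nil, youngLeavesPoly_one, mul_one]

theorem youngLeavesPoly_succ_succ_succ (m : ℕ) :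
    youngLeavesPoly (m + 3) = (1 + X) * youngLeavesPoly (m + 2) +
      ∑ ij ∈ antidiagonal m, youngLeavesPoly (ij.1 + 1) * youngLeavesPoly (ij.2 + 1) := by
  rw [youngLeavesPoly, sum_treesOfNumEdgesEq_succ, sum_antidiagonal_succ, sum_antidiagonal_succ']
  simp only [sum_node_nil_snoc, sum_snoc_node_nil, sum_snoc_of_ne_node_nil]
  ring

theorem youngLeavesPoly_succ (m : ℕ) : youngLeavesPoly (m + 1) = weightedMotzkin (1 + X) m := by
  induction m using Nat.strong_induction_on with
  | _ m ih =>
    match m, ih with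
    | 0, _ => rw [youngLeavesPoly_one, weightedMotzkin_zero]
    | 1, _ => rw [youngLeavesPoly_two, weightedMotzkin_one]
    | m + 2, ih =>
      rw [youngLeavesPoly_succ_succ_succ, weightedMotzkin_succ_succ, ih (m + 1) (by omega)]
      congr 1
      refine sum_congr rfl fun ij hij => ?_
      have hsum := HasAntidiagonal.mem_antidiagonal.1 hij
      rw [ih ij.1 (by omega), ih ij.2 (by omega)]

end PlaneTree

/-- The number of plane trees with `n` edges and `k` young leaves is `C(n-1,k)·M_{n-k-1}`. -/
theorem card_planeTrees_young (n k : ℕ) (hn : 1 ≤ n) :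
    Nat.card {T : PlaneTree // T.edges = n ∧ T.youngLeaves = k} =
      (n - 1).choose k * motzkin (n - k - 1) := by
  obtain ⟨m, rfl⟩ := Nat.exists_eq_add_of_le' hn
  rw [← PlaneTree.coeff_youngLeavesPoly, PlaneTree.youngLeavesPoly_succ,
    coeff_weightedMotzkin_one_add_X, Nat.add_sub_cancel, Nat.sub_right_comm, Nat.add_sub_cancel]
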